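/- For any polynomial p(η) = Σ_{k=0}^{n} a_k η^k, define I[p](η) = Σ_{k=0}^{n+1} b_k η^k by b_0 = 0 and the downward recursion b_{k+1} = (1/g'_k^{(0)})(a_k - Σ_{j=k+1}^{n} g'_j^{(j-k)} b_{j+1}) for k = n, n-1, ..., 0, where g'_j^{(m)} = 0 for m odd and g'_j^{(m)} = (-1)^{m/2} 2^{-m} C(j+1, m+1) for m even. Then the polynomial P = I[p] satisfies (P̌(x - i/2) - P̌(x + i/2)) / (η(x - i/2) - η(x + i/2)) = p̌(x), where P̌(x) = P(x), p̌(x) = p(x), and η(x) = x, γ = 1. -/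

import Mathlib

/-!
By the binomial theorem, `(x - i/2)^(j+1) - (x + i/2)^(j+1) = -i Σ_{k≤j} g'_j^{(j-k)} x^k`:
the terms with `j - k` odd cancel, and `g'_j^{(m)}` is exactly the surviving coefficient.
Hence the difference quotient of `P = Σ b_k η^k` is `Σ_k x^k Σ_{j=k}^n g'_j^{(j-k)} b_{j+1}`,
and the downward recursion for the `b_k` is precisely the statement that each inner sum is `a_k`.
-/

open Finset

/-- `g'_j^{(m)} = θ(m even) (-1)^{m/2} 2^{-m} C(j+1, m+1)`. -/
noncomputable def gcoef (j m : ℕ) : ℂ :=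
  if Even m then (-1) ^ (m / 2) * (2 : ℂ) ^ (-(m : ℤ)) * ((j + 1).choose (m + 1) : ℂ) else 0

open Complex

lemma gcoef_zero (k : ℕ) : gcoef k 0 = k + 1 := by
  simp [gcoef]

lemma choose_mul_neg_pow_sub_pow_eq_gcoef (j m : ℕ) :
    ((j + 1).choose (m + 1) : ℂ) * ((-(I / 2)) ^ (m + 1) - (I / 2) ^ (m + 1)) =
      -I * gcoef j m := by
  unfold gcoef
  rcases Nat.even_or_odd m with ⟨t, rfl⟩ | ⟨t, rfl⟩
  · have ht : (t + t) / 2 = t := by omega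
    rw [if_pos ⟨t, rfl⟩, ht, Odd.neg_pow ⟨t, by ring⟩, zpow_neg, zpow_natCast, div_pow,
      pow_succ, ← two_mul, pow_mul, I_sq]
    field_simp
    ring
  · rw [if_neg (Nat.not_even_iff_odd.mpr ⟨t, rfl⟩), Even.neg_pow ⟨t + 1, by ring⟩]
    ring

lemma sub_pow_sub_add_pow {R : Type*} [CommRing R] (x h : R) (j : ℕ) :
    (x - h) ^ (j + 1) - (x + h) ^ (j + 1) =
      ∑ k ∈ range (j + 1),
        x ^ k * ((-h) ^ (j + 1 - k) - h ^ (j + 1 - k)) * (j + 1).choose k := by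
  rw [sub_eq_add_neg x, add_pow, add_pow, ← sum_sub_distrib, sum_range_succ]
  simp only [Nat.sub_self, pow_zero, sub_self, mul_one, add_zero]
  exact sum_congr rfl fun k _ => by ring

lemma sub_half_I_pow_sub_add_half_I_pow (x : ℂ) (j : ℕ) :
    (x - I / 2) ^ (j + 1) - (x + I / 2) ^ (j + 1) =
      -I * ∑ k ∈ range (j + 1), gcoef j (j - k) * x ^ k := by
  rw [sub_pow_sub_add_pow, mul_sum]
  refine sum_congr rfl fun k hk => ?_
  obtain ⟨m, rfl⟩ := Nat.exists_eq_add_of_le (Nat.lt_succ_iff.mp (mem_range.mp hk))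
  have hchoose : (k + m + 1).choose k = (k + m + 1).choose (m + 1) := by
    rw [add_assoc, Nat.choose_symm_add]
  rw [show k + m + 1 - k = m + 1 by omega, Nat.add_sub_cancel_left, hchoose]
  linear_combination x ^ k * choose_mul_neg_pow_sub_pow_eq_gcoef (k + m) m

lemma sum_range_sum_range_succ_eq_sum_sum_Icc {M : Type*} [AddCommMonoid M] (n : ℕ)
    (f : ℕ → ℕ → M) :
    ∑ j ∈ range (n + 1), ∑ k ∈ range (j + 1), f j k =
      ∑ k ∈ range (n + 1), ∑ j ∈ Icc k n, f j k :=
  sum_comm' fun j k => by simp only [mem_range, mem_Icc]; omega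

lemma sum_mul_sub_half_I_pow_sub_sum_mul_add_half_I_pow (n : ℕ) (b : ℕ → ℂ) (hb0 : b 0 = 0)
    (x : ℂ) :
    (∑ k ∈ range (n + 2), b k * (x - I / 2) ^ k) -
        ∑ k ∈ range (n + 2), b k * (x + I / 2) ^ k =
      -I * ∑ k ∈ range (n + 1), (∑ j ∈ Icc k n, gcoef j (j - k) * b (j + 1)) * x ^ k := by
  rw [← sum_sub_distrib, sum_range_succ', hb0]
  simp only [← mul_sub, sub_half_I_pow_sub_add_half_I_pow, zero_mul, sub_self, add_zero,
    mul_sum, sum_mul]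
  rw [sum_range_sum_range_succ_eq_sum_sum_Icc]
  exact sum_congr rfl fun k _ => sum_congr rfl fun j _ => by ring

lemma sum_Icc_gcoef_mul_eq_of_rec (n : ℕ) (a b : ℕ → ℂ)
    (hb : ∀ k ≤ n, b (k + 1) =
      (1 / gcoef k 0) * (a k - ∑ j ∈ Icc (k + 1) n, gcoef j (j - k) * b (j + 1)))
    {k : ℕ} (hk : k ≤ n) :
    ∑ j ∈ Icc k n, gcoef j (j - k) * b (j + 1) = a k := by
  rw [← insert_Icc_add_one_left_eq_Icc hk, sum_insert (by simp), Nat.sub_self, hb k hk,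
    gcoef_zero]
  field_simp
  ring

/-- If `P = I[p]` is defined from `p(η) = Σ_{k≤n} a_k η^k` by `b_0 = 0` and the downward
recursion `b_{k+1} = (1/g'_k^{(0)})(a_k - Σ_{j=k+1}^n g'_j^{(j-k)} b_{j+1})`, then
`(P̌(x-i/2) - P̌(x+i/2)) / (η(x-i/2) - η(x+i/2)) = p̌(x)` where `η(x) = x`, `γ = 1`. -/
theorem map_I_difference_property (n : ℕ) (a b : ℕ → ℂ)
    (hb0 : b 0 = 0)
    (hb : ∀ k ≤ n, b (k + 1) =
      (1 / gcoef k 0) * (a k - ∑ j ∈ Finset.Icc (k + 1) n, gcoef j (j - k) * b (j + 1)))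
    (x : ℂ) :
    ((∑ k ∈ Finset.range (n + 2), b k * (x - Complex.I / 2) ^ k)
        - ∑ k ∈ Finset.range (n + 2), b k * (x + Complex.I / 2) ^ k) /
        ((x - Complex.I / 2) - (x + Complex.I / 2)) =
      ∑ k ∈ Finset.range (n + 1), a k * x ^ k := by
  have hden : x - I / 2 - (x + I / 2) = -I := by ring
  rw [sum_mul_sub_half_I_pow_sub_sum_mul_add_half_I_pow n b hb0, hden,
    mul_div_cancel_left₀ _ (neg_ne_zero.mpr I_ne_zero)]
  refine sum_congr rfl fun k hk => ?_
  rw [sum_Icc_gcoef_mul_eq_of_rec n a b hb (Nat.lt_succ_iff.mp (mem_range.mp hk))]
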